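/- Let u* ∈ L_exp^ε(ρ₁), v* ∈ L_exp^ε(ρ₂) with c bounded. The following are equivalent: (1) (u*,v*) maximizes D_ε; (2) v* = (u*)^{(c,ε)} and u* = (v*)^{(c,ε)}; (3) the measure γ* = e^{(u*(x)+v*(y)-c(x,y))/ε} ρ₁⊗ρ₂ belongs to Π(ρ₁,ρ₂); (4) OT_ε(ρ₁,ρ₂) = D_ε(u*,v*) + ε. In these cases γ* is the unique minimizer of γ ↦ ε KL(γ|K) over Π(ρ₁,ρ₂). -/

import Mathlib

/-!
Everything rests on the Gibbs variational inequality: for a probability measure `γ ≪ K` and a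
function `ψ`, `∫ ψ dγ + 1 - ∫ e^ψ dK ≤ KL(γ | K)`, with equality only for `γ = e^ψ K`; it is the
nonnegativity of `KL(γ | K.tilted ψ)` combined with `log t ≤ t - 1`.

For `ψ(x, y) = (u x + v y) / ε` and a coupling `γ` this is weak duality
`D_ε(u, v) + ε ≤ ε KL(γ | K)`, with equality only at `γ = γ*`. For `γ = K` it says
`∫ f ≤ ∫ e^f - 1`, with equality only for `f = 0` a.e.; so replacing `v` by `u^{(c,ε)}` strictly
increases `D_ε` unless `v = u^{(c,ε)}` a.e., which gives (1) ⇒ (2). The marginals of `γ*` are `ρ₂`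
and `ρ₁` reweighted by `e^{(v - u^{(c,ε)})/ε}` and `e^{(u - v^{(c,ε)})/ε}`, hence (2) ⇔ (3). When
`γ*` is a coupling, `ε KL(γ* | K) = ∫ u + ∫ v = D_ε(u, v) + ε`, so weak duality is attained:
(3) ⇒ (4); and (4) ⇒ (1) is weak duality once more.
-/

open MeasureTheory Real

noncomputable section

open Classical in
/-- Kullback–Leibler divergence, valued in `EReal`. -/
def KL {Z : Type*} [MeasurableSpace Z] (μ ν : Measure Z) : EReal :=
  if μ ≪ ν ∧ Integrable (fun z => Real.log (μ.rnDeriv ν z).toReal) μ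
  then ((∫ z, Real.log (μ.rnDeriv ν z).toReal ∂μ : ℝ) : EReal) else ⊤

/-- `u ∈ L_exp^ε(ρ)`. -/
def Lexp {Z : Type*} [MeasurableSpace Z] (ε : ℝ) (ρ : Measure Z) (u : Z → ℝ) : Prop :=
  Measurable u ∧ Integrable (fun z => Real.exp (u z / ε)) ρ ∧
    0 < ∫ z, Real.exp (u z / ε) ∂ρ

open Classical in
/-- The dual Entropy–Kantorovich functional, valued in `EReal`. -/
def Dext {X Y : Type*} [MeasurableSpace X] [MeasurableSpace Y]
    (ρ₁ : Measure X) (ρ₂ : Measure Y) (c : X → Y → ℝ) (ε : ℝ)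
    (u : X → ℝ) (v : Y → ℝ) : EReal :=
  if Integrable u ρ₁ ∧ Integrable v ρ₂ ∧
      Integrable (fun p : X × Y => Real.exp ((u p.1 + v p.2 - c p.1 p.2) / ε)) (ρ₁.prod ρ₂)
  then (((∫ x, u x ∂ρ₁) + (∫ y, v y ∂ρ₂)
    - ε * ∫ p, Real.exp ((u p.1 + v p.2 - c p.1 p.2) / ε) ∂(ρ₁.prod ρ₂) : ℝ) : EReal)
  else ⊥

/-- Couplings of `ρ₁` and `ρ₂`. -/
def Coupling {X Y : Type*} [MeasurableSpace X] [MeasurableSpace Y]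
    (ρ₁ : Measure X) (ρ₂ : Measure Y) (γ : Measure (X × Y)) : Prop :=
  IsProbabilityMeasure γ ∧ γ.map Prod.fst = ρ₁ ∧ γ.map Prod.snd = ρ₂

/-- The entropic `(c,ε)`-transform of `u : X → ℝ`. -/
def transform {X Y : Type*} [MeasurableSpace X] (ρ₁ : Measure X)
    (c : X → Y → ℝ) (ε : ℝ) (u : X → ℝ) : Y → ℝ :=
  fun y => -ε * Real.log (∫ x, Real.exp ((u x - c x y) / ε) ∂ρ₁)

/-- The entropic `(c,ε)`-transform of `v : Y → ℝ`. -/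
def transformY {X Y : Type*} [MeasurableSpace Y] (ρ₂ : Measure Y)
    (c : X → Y → ℝ) (ε : ℝ) (v : Y → ℝ) : X → ℝ :=
  fun x => -ε * Real.log (∫ y, Real.exp ((v y - c x y) / ε) ∂ρ₂)

open InformationTheory
open scoped ENNReal

section Gibbs

variable {α : Type*} [MeasurableSpace α] {μ ν : Measure α} {f : α → ℝ}

theorem withDensity_ofReal_exp_eq_self_iff [SigmaFinite μ] (hf : AEMeasurable f μ) :
    μ.withDensity (fun x ↦ ENNReal.ofReal (exp (f x))) = μ ↔ f =ᵐ[μ] 0 := by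
  conv_lhs => rhs; rw [← withDensity_one (μ := μ)]
  rw [withDensity_eq_iff_of_sigmaFinite (g := 1) (by fun_prop) (by fun_prop)]
  simp only [Filter.EventuallyEq, Pi.one_apply, Pi.zero_apply, ENNReal.ofReal_eq_one,
    exp_eq_one_iff]

lemma MeasureTheory.Measure.AbsolutelyContinuous.neZero [NeZero μ] (hμν : μ ≪ ν) : NeZero ν :=
  ⟨fun hν ↦ NeZero.ne μ (Measure.measure_univ_eq_zero.1 (hμν (by simp [hν])))⟩

variable [IsProbabilityMeasure μ] [SigmaFinite ν]

theorem integral_sub_log_integral_exp_le_integral_llr (hμν : μ ≪ ν) (hfμ : Integrable f μ)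
    (hfν : Integrable (fun x ↦ exp (f x)) ν) (h_int : Integrable (llr μ ν) μ) :
    ∫ x, f x ∂μ - log (∫ x, exp (f x) ∂ν) ≤ ∫ x, llr μ ν x ∂μ := by
  have := hμν.neZero
  have := isProbabilityMeasure_tilted hfν
  have := integral_llr_add_sub_measure_univ_nonneg (hμν.trans (absolutelyContinuous_tilted hfν))
    (integrable_llr_tilted_right hμν hfμ h_int hfν)
  simp only [integral_llr_tilted_right hμν hfμ hfν h_int, probReal_univ] at this
  linarith

theorem integral_add_one_sub_integral_exp_le_integral_llr (hμν : μ ≪ ν) (hfμ : Integrable f μ)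
    (hfν : Integrable (fun x ↦ exp (f x)) ν) (h_int : Integrable (llr μ ν) μ) :
    ∫ x, f x ∂μ + 1 - ∫ x, exp (f x) ∂ν ≤ ∫ x, llr μ ν x ∂μ := by
  have := hμν.neZero
  have := log_le_sub_one_of_pos (integral_exp_pos hfν)
  linarith [integral_sub_log_integral_exp_le_integral_llr hμν hfμ hfν h_int]

theorem eq_withDensity_exp_of_integral_llr_eq (hμν : μ ≪ ν) (hfμ : Integrable f μ)
    (hfν : Integrable (fun x ↦ exp (f x)) ν) (h_int : Integrable (llr μ ν) μ)
    (h_eq : ∫ x, llr μ ν x ∂μ = ∫ x, f x ∂μ + 1 - ∫ x, exp (f x) ∂ν) :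
    μ = ν.withDensity fun x ↦ ENNReal.ofReal (exp (f x)) := by
  have := hμν.neZero
  have := isProbabilityMeasure_tilted hfν
  -- equality forces `log Z = Z - 1` for `Z = ∫ e^f dν`, and `KL(μ | ν.tilted f) = 0`
  have hZ : ∫ x, exp (f x) ∂ν = 1 := by
    by_contra hZ
    have := log_lt_sub_one_of_pos (integral_exp_pos hfν) hZ
    linarith [integral_sub_log_integral_exp_le_integral_llr hμν hfμ hfν h_int]
  have hkl : klDiv μ (ν.tilted f) = 0 := by
    rw [klDiv_of_ac_of_integrable (hμν.trans (absolutelyContinuous_tilted hfν))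
      (integrable_llr_tilted_right hμν hfμ h_int hfν), integral_llr_tilted_right hμν hfμ hfν h_int]
    simp [h_eq, hZ]
  rw [klDiv_eq_zero_iff.1 hkl, Measure.tilted, hZ]
  simp_rw [div_one]

theorem ae_eq_zero_of_integral_exp_sub_one_le_integral (hf : Integrable f μ)
    (hexp : Integrable (fun x ↦ exp (f x)) μ) (h : ∫ x, exp (f x) ∂μ - 1 ≤ ∫ x, f x ∂μ) :
    f =ᵐ[μ] 0 := by
  have hllr : llr μ μ =ᵐ[μ] 0 := llr_self μ
  have h_int : Integrable (llr μ μ) μ := (integrable_congr hllr).2 (integrable_zero _ _ _)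
  have h0 : ∫ x, llr μ μ x ∂μ = 0 := by simp [integral_congr_ae hllr]
  have hle := integral_add_one_sub_integral_exp_le_integral_llr .rfl hf hexp h_int
  have hμ := eq_withDensity_exp_of_integral_llr_eq .rfl hf hexp h_int (by linarith)
  exact (withDensity_ofReal_exp_eq_self_iff hf.aemeasurable).1 hμ.symm

end Gibbs

lemma sub_div_ae_eq_zero_iff {α : Type*} [MeasurableSpace α] {μ : Measure α} {a b : α → ℝ} {ε : ℝ}
    (hε : ε ≠ 0) : (fun x ↦ (a x - b x) / ε) =ᵐ[μ] 0 ↔ a =ᵐ[μ] b := by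
  simp [Filter.EventuallyEq, hε, sub_eq_zero]

section Product

variable {X Y : Type*} [MeasurableSpace X] [MeasurableSpace Y] {ρ₁ : Measure X} {ρ₂ : Measure Y}

lemma map_fst_prod_withDensity [SFinite ρ₁] [SFinite ρ₂] {f : X × Y → ℝ≥0∞} (hf : Measurable f) :
    ((ρ₁.prod ρ₂).withDensity f).map Prod.fst = ρ₁.withDensity fun x ↦ ∫⁻ y, f (x, y) ∂ρ₂ := by
  ext s hs
  rw [Measure.map_apply measurable_fst hs, withDensity_apply _ (measurable_fst hs),
    withDensity_apply _ hs, ← Set.prod_univ, ← Measure.prod_restrict, Measure.restrict_univ,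
    lintegral_prod _ hf.aemeasurable]

lemma map_snd_prod_withDensity [SFinite ρ₁] [SFinite ρ₂] {f : X × Y → ℝ≥0∞} (hf : Measurable f) :
    ((ρ₁.prod ρ₂).withDensity f).map Prod.snd = ρ₂.withDensity fun y ↦ ∫⁻ x, f (x, y) ∂ρ₁ := by
  ext s hs
  rw [Measure.map_apply measurable_snd hs, withDensity_apply _ (measurable_snd hs),
    withDensity_apply _ hs, ← Set.univ_prod, ← Measure.prod_restrict, Measure.restrict_univ,
    lintegral_prod_symm' _ hf]

lemma coupling_iff [IsProbabilityMeasure ρ₁] {γ : Measure (X × Y)} :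
    Coupling ρ₁ ρ₂ γ ↔ γ.map Prod.fst = ρ₁ ∧ γ.map Prod.snd = ρ₂ := by
  refine ⟨fun h => h.2, fun h => ⟨⟨?_⟩, h⟩⟩
  rw [← Set.preimage_univ (f := Prod.fst), ← Measure.map_apply measurable_fst MeasurableSet.univ,
    h.1, measure_univ]

namespace Coupling

variable {γ : Measure (X × Y)} {u : X → ℝ} {v : Y → ℝ}

lemma integrable_fst_add_snd (hγ : Coupling ρ₁ ρ₂ γ) (hu : Integrable u ρ₁)
    (hv : Integrable v ρ₂) : Integrable (fun p : X × Y ↦ u p.1 + v p.2) γ :=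
  ((hγ.2.1 ▸ hu).comp_measurable measurable_fst).add ((hγ.2.2 ▸ hv).comp_measurable measurable_snd)

lemma integral_fst_add_snd (hγ : Coupling ρ₁ ρ₂ γ) (hu : Integrable u ρ₁)
    (hv : Integrable v ρ₂) : ∫ p, u p.1 + v p.2 ∂γ = ∫ x, u x ∂ρ₁ + ∫ y, v y ∂ρ₂ := by
  rw [integral_add ((hγ.2.1 ▸ hu).comp_measurable measurable_fst)
    ((hγ.2.2 ▸ hv).comp_measurable measurable_snd), ← integral_map measurable_fst.aemeasurable
    (hγ.2.1 ▸ hu.1), ← integral_map measurable_snd.aemeasurable (hγ.2.2 ▸ hv.1), hγ.2.1, hγ.2.2]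

end Coupling

end Product

lemma lexp_of_abs_le {Z : Type*} [MeasurableSpace Z] {ρ : Measure Z} [IsFiniteMeasure ρ]
    [NeZero ρ] {g : Z → ℝ} {B : ℝ} (ε : ℝ) (hg : Measurable g) (hB : ∀ z, |g z| ≤ B) :
    Lexp ε ρ g := by
  have hexp : Integrable (fun z ↦ exp (g z / ε)) ρ := by
    refine .of_bound (by fun_prop) (exp (B / |ε|)) (ae_of_all _ fun z => ?_)
    rw [norm_of_nonneg (exp_nonneg _)]
    refine exp_le_exp.2 ((le_abs_self _).trans ?_)
    rw [abs_div]
    exact div_le_div_of_nonneg_right (hB z) (abs_nonneg ε)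
  exact ⟨hg, hexp, integral_exp_pos hexp⟩

section Transform

variable {X Y : Type*} [MeasurableSpace X] [MeasurableSpace Y] {ρ₁ : Measure X}
  {ρ₂ : Measure Y} {c : X → Y → ℝ} {ε M : ℝ} {u : X → ℝ}

lemma exp_sub_div_le (hε : 0 < ε) (a : ℝ) {b : ℝ} (hb : |b| ≤ M) :
    exp ((a - b) / ε) ≤ exp (M / ε) * exp (a / ε) := by
  rw [← exp_add, ← add_div]
  gcongr
  linarith [(abs_le.1 hb).1]

lemma exp_le_exp_sub_div (hε : 0 < ε) (a : ℝ) {b : ℝ} (hb : |b| ≤ M) :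
    exp (-M / ε) * exp (a / ε) ≤ exp ((a - b) / ε) := by
  rw [← exp_add, ← add_div]
  gcongr
  linarith [(abs_le.1 hb).2]

lemma integrable_exp_sub_cost (hε : 0 < ε) (hc : Measurable (Function.uncurry c))
    (hM : ∀ x y, |c x y| ≤ M) (hu : Lexp ε ρ₁ u) (y : Y) :
    Integrable (fun x ↦ exp ((u x - c x y) / ε)) ρ₁ :=
  (hu.2.1.const_mul (exp (M / ε))).mono'
    ((hu.1.sub (hc.comp measurable_prodMk_right)).div_const ε).exp.aestronglyMeasurable
    (ae_of_all _ fun x => by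
      simpa [norm_of_nonneg (exp_nonneg _)] using exp_sub_div_le hε (u x) (hM x y))

lemma integral_exp_sub_cost_mem_Icc (hε : 0 < ε) (hc : Measurable (Function.uncurry c))
    (hM : ∀ x y, |c x y| ≤ M) (hu : Lexp ε ρ₁ u) (y : Y) :
    ∫ x, exp ((u x - c x y) / ε) ∂ρ₁ ∈ Set.Icc (exp (-M / ε) * ∫ x, exp (u x / ε) ∂ρ₁)
      (exp (M / ε) * ∫ x, exp (u x / ε) ∂ρ₁) := by
  rw [← integral_const_mul, ← integral_const_mul]
  exact ⟨integral_mono (hu.2.1.const_mul _) (integrable_exp_sub_cost hε hc hM hu y)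
      fun x => exp_le_exp_sub_div hε (u x) (hM x y),
    integral_mono (integrable_exp_sub_cost hε hc hM hu y) (hu.2.1.const_mul _)
      fun x => exp_sub_div_le hε (u x) (hM x y)⟩

lemma integral_exp_sub_cost_pos (hε : 0 < ε) (hc : Measurable (Function.uncurry c))
    (hM : ∀ x y, |c x y| ≤ M) (hu : Lexp ε ρ₁ u) (y : Y) :
    0 < ∫ x, exp ((u x - c x y) / ε) ∂ρ₁ :=
  (mul_pos (exp_pos _) hu.2.2).trans_le (integral_exp_sub_cost_mem_Icc hε hc hM hu y).1

lemma exp_neg_transform_div (hε : 0 < ε) (hc : Measurable (Function.uncurry c))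
    (hM : ∀ x y, |c x y| ≤ M) (hu : Lexp ε ρ₁ u) (y : Y) :
    exp (-transform ρ₁ c ε u y / ε) = ∫ x, exp ((u x - c x y) / ε) ∂ρ₁ := by
  rw [transform, neg_mul, neg_neg, mul_div_cancel_left₀ _ hε.ne',
    exp_log (integral_exp_sub_cost_pos hε hc hM hu y)]

lemma abs_transform_le (hε : 0 < ε) (hc : Measurable (Function.uncurry c))
    (hM : ∀ x y, |c x y| ≤ M) (hu : Lexp ε ρ₁ u) (y : Y) :
    |transform ρ₁ c ε u y| ≤ ε * |log (∫ x, exp (u x / ε) ∂ρ₁)| + M := by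
  obtain ⟨hlow, hup⟩ := integral_exp_sub_cost_mem_Icc hε hc hM hu y
  have hI := hu.2.2
  have h1 := log_le_log (mul_pos (exp_pos _) hI) hlow
  have h2 := log_le_log (integral_exp_sub_cost_pos hε hc hM hu y) hup
  rw [log_mul (exp_pos _).ne' hI.ne', log_exp] at h1 h2
  rw [neg_div] at h1
  set L := log (∫ x, exp ((u x - c x y) / ε) ∂ρ₁)
  set L₀ := log (∫ x, exp (u x / ε) ∂ρ₁)
  have h1' : (L₀ - L) * ε ≤ M := (le_div_iff₀ hε).1 (by linarith)
  have h2' : (L - L₀) * ε ≤ M := (le_div_iff₀ hε).1 (by linarith)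
  rw [transform, abs_le]
  constructor <;> nlinarith [le_abs_self L₀, neg_abs_le L₀]

lemma measurable_transform [SFinite ρ₁] (hc : Measurable (Function.uncurry c))
    (hu : Measurable u) : Measurable (transform ρ₁ c ε u) :=
  (((hu.comp measurable_fst).sub hc).div_const ε).exp.stronglyMeasurable.integral_prod_left'
    |>.measurable.log.const_mul (-ε)

lemma lexp_transform [IsFiniteMeasure ρ₂] [NeZero ρ₂] [SFinite ρ₁] (hε : 0 < ε)
    (hc : Measurable (Function.uncurry c)) (hM : ∀ x y, |c x y| ≤ M) (hu : Lexp ε ρ₁ u) :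
    Lexp ε ρ₂ (transform ρ₁ c ε u) :=
  lexp_of_abs_le ε (measurable_transform hc hu.1) (abs_transform_le hε hc hM hu)

lemma integrable_transform [IsFiniteMeasure ρ₂] [SFinite ρ₁] (hε : 0 < ε)
    (hc : Measurable (Function.uncurry c)) (hM : ∀ x y, |c x y| ≤ M) (hu : Lexp ε ρ₁ u) :
    Integrable (transform ρ₁ c ε u) ρ₂ :=
  .of_bound (measurable_transform hc hu.1).aestronglyMeasurable _
    (ae_of_all _ (abs_transform_le hε hc hM hu))

end Transform

section Dual

variable {X Y : Type*} [MeasurableSpace X] [MeasurableSpace Y] {ρ₁ : Measure X}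
  {ρ₂ : Measure Y} {c : X → Y → ℝ} {ε M : ℝ} {u : X → ℝ} {v : Y → ℝ}

lemma exp_add_sub_div (a b d : ℝ) : exp ((a + b - d) / ε) = exp (b / ε) * exp ((a - d) / ε) := by
  rw [← exp_add]
  ring_nf

lemma measurable_exp_dual (hc : Measurable (Function.uncurry c)) (hu : Measurable u)
    (hv : Measurable v) :
    Measurable fun p : X × Y ↦ exp ((u p.1 + v p.2 - c p.1 p.2) / ε) :=
  ((((hu.comp measurable_fst).add (hv.comp measurable_snd)).sub hc).div_const ε).exp

lemma integrable_exp_dual [SFinite ρ₂] (hε : 0 < ε) (hc : Measurable (Function.uncurry c))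
    (hM : ∀ x y, |c x y| ≤ M) (hu : Lexp ε ρ₁ u) (hv : Lexp ε ρ₂ v) :
    Integrable (fun p : X × Y ↦ exp ((u p.1 + v p.2 - c p.1 p.2) / ε)) (ρ₁.prod ρ₂) :=
  ((hu.2.1.mul_prod hv.2.1).const_mul (exp (M / ε))).mono'
    (measurable_exp_dual hc hu.1 hv.1).aestronglyMeasurable
    (ae_of_all _ fun p => by
      rw [norm_of_nonneg (exp_nonneg _), ← exp_add, ← add_div]
      exact exp_sub_div_le hε _ (hM _ _))

lemma integrable_exp_dual_left (hε : 0 < ε) (hc : Measurable (Function.uncurry c))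
    (hM : ∀ x y, |c x y| ≤ M) (hu : Lexp ε ρ₁ u) (v : Y → ℝ) (y : Y) :
    Integrable (fun x ↦ exp ((u x + v y - c x y) / ε)) ρ₁ := by
  simpa only [exp_add_sub_div] using (integrable_exp_sub_cost hε hc hM hu y).const_mul _

lemma integral_exp_dual_left (hε : 0 < ε) (hc : Measurable (Function.uncurry c))
    (hM : ∀ x y, |c x y| ≤ M) (hu : Lexp ε ρ₁ u) (v : Y → ℝ) (y : Y) :
    ∫ x, exp ((u x + v y - c x y) / ε) ∂ρ₁ = exp ((v y - transform ρ₁ c ε u y) / ε) := by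
  simp only [exp_add_sub_div]
  rw [integral_const_mul, ← exp_neg_transform_div hε hc hM hu y, ← exp_add]
  ring_nf

lemma integrable_exp_sub_transform [SFinite ρ₁] [SFinite ρ₂] (hε : 0 < ε)
    (hc : Measurable (Function.uncurry c)) (hM : ∀ x y, |c x y| ≤ M) (hu : Lexp ε ρ₁ u)
    (hexp : Integrable (fun p : X × Y ↦ exp ((u p.1 + v p.2 - c p.1 p.2) / ε)) (ρ₁.prod ρ₂)) :
    Integrable (fun y ↦ exp ((v y - transform ρ₁ c ε u y) / ε)) ρ₂ := by
  simpa only [integral_exp_dual_left hε hc hM hu v] using hexp.integral_prod_right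

lemma integral_exp_dual_eq [SFinite ρ₁] [SFinite ρ₂] (hε : 0 < ε)
    (hc : Measurable (Function.uncurry c)) (hM : ∀ x y, |c x y| ≤ M) (hu : Lexp ε ρ₁ u)
    (hexp : Integrable (fun p : X × Y ↦ exp ((u p.1 + v p.2 - c p.1 p.2) / ε)) (ρ₁.prod ρ₂)) :
    ∫ p, exp ((u p.1 + v p.2 - c p.1 p.2) / ε) ∂(ρ₁.prod ρ₂)
      = ∫ y, exp ((v y - transform ρ₁ c ε u y) / ε) ∂ρ₂ := by
  simp only [integral_prod_symm _ hexp, integral_exp_dual_left hε hc hM hu v]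

lemma Dext_of_integrable (h : Integrable u ρ₁ ∧ Integrable v ρ₂ ∧
    Integrable (fun p : X × Y ↦ exp ((u p.1 + v p.2 - c p.1 p.2) / ε)) (ρ₁.prod ρ₂)) :
    Dext ρ₁ ρ₂ c ε u v = ((∫ x, u x ∂ρ₁ + ∫ y, v y ∂ρ₂
      - ε * ∫ p, exp ((u p.1 + v p.2 - c p.1 p.2) / ε) ∂(ρ₁.prod ρ₂) : ℝ) : EReal) :=
  if_pos h

lemma integrable_of_Dext_ne_bot (h : Dext ρ₁ ρ₂ c ε u v ≠ ⊥) : Integrable u ρ₁ ∧ Integrable v ρ₂ ∧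
    Integrable (fun p : X × Y ↦ exp ((u p.1 + v p.2 - c p.1 p.2) / ε)) (ρ₁.prod ρ₂) := by
  by_contra h'
  exact h (if_neg h')

lemma Dext_swap [SFinite ρ₁] [SFinite ρ₂] :
    Dext ρ₂ ρ₁ (fun y x ↦ c x y) ε v u = Dext ρ₁ ρ₂ c ε u v := by
  set F := fun p : X × Y ↦ exp ((u p.1 + v p.2 - c p.1 p.2) / ε)
  have hF : (fun q : Y × X ↦ exp ((v q.1 + u q.2 - c q.2 q.1) / ε)) = fun q ↦ F q.swap := by
    funext q
    simp only [F, Prod.fst_swap, Prod.snd_swap, add_comm]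
  unfold Dext
  rw [hF, integral_prod_swap F, show (fun q : Y × X ↦ F q.swap) = F ∘ Prod.swap from rfl,
    integrable_swap_iff]
  classical
  exact if_congr and_left_comm (by rw [add_comm (∫ y, v y ∂ρ₂)]) rfl

end Dual

section Sinkhorn

variable {X Y : Type*} [MeasurableSpace X] [MeasurableSpace Y] {ρ₁ : Measure X}
  {ρ₂ : Measure Y} {c : X → Y → ℝ} {ε M : ℝ} {u : X → ℝ} {v : Y → ℝ}

lemma Dext_transform [SFinite ρ₁] [IsProbabilityMeasure ρ₂] (hε : 0 < ε)
    (hc : Measurable (Function.uncurry c)) (hM : ∀ x y, |c x y| ≤ M) (hu : Lexp ε ρ₁ u)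
    (hui : Integrable u ρ₁) :
    Dext ρ₁ ρ₂ c ε u (transform ρ₁ c ε u)
      = ((∫ x, u x ∂ρ₁ + ∫ y, transform ρ₁ c ε u y ∂ρ₂ - ε : ℝ) : EReal) := by
  have hexp := integrable_exp_dual hε hc hM hu (lexp_transform (ρ₂ := ρ₂) hε hc hM hu)
  rw [Dext_of_integrable ⟨hui, integrable_transform hε hc hM hu, hexp⟩,
    integral_exp_dual_eq hε hc hM hu hexp]
  simp

theorem ae_eq_transform_of_Dext_transform_le [SFinite ρ₁] [IsProbabilityMeasure ρ₂]
    (hε : 0 < ε) (hc : Measurable (Function.uncurry c)) (hM : ∀ x y, |c x y| ≤ M)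
    (hu : Lexp ε ρ₁ u) (hui : Integrable u ρ₁)
    (h : Dext ρ₁ ρ₂ c ε u (transform ρ₁ c ε u) ≤ Dext ρ₁ ρ₂ c ε u v) :
    v =ᵐ[ρ₂] transform ρ₁ c ε u := by
  -- with `w = (v - u^{(c,ε)}) / ε`, `h` reads `∫ e^w - 1 ≤ ∫ w` after Fubini
  rw [Dext_transform hε hc hM hu hui] at h
  obtain ⟨-, hvi, hexp⟩ := integrable_of_Dext_ne_bot (ne_bot_of_le_ne_bot (EReal.coe_ne_bot _) h)
  rw [Dext_of_integrable ⟨hui, hvi, hexp⟩, integral_exp_dual_eq hε hc hM hu hexp,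
    EReal.coe_le_coe_iff] at h
  have hTi := integrable_transform (ρ₂ := ρ₂) hε hc hM hu
  refine (sub_div_ae_eq_zero_iff hε.ne').1 (ae_eq_zero_of_integral_exp_sub_one_le_integral
    ((hvi.sub hTi).div_const ε) (integrable_exp_sub_transform hε hc hM hu hexp) ?_)
  rw [integral_div, integral_sub hvi hTi, le_div_iff₀ hε]
  linarith

theorem ae_eq_transform_of_forall_Dext_le [IsProbabilityMeasure ρ₁] [IsProbabilityMeasure ρ₂]
    (hε : 0 < ε) (hc : Measurable (Function.uncurry c)) (hM : ∀ x y, |c x y| ≤ M)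
    (hu : Lexp ε ρ₁ u) (hv : Lexp ε ρ₂ v)
    (hmax : ∀ (u' : X → ℝ) (v' : Y → ℝ), Lexp ε ρ₁ u' → Lexp ε ρ₂ v' →
      Dext ρ₁ ρ₂ c ε u' v' ≤ Dext ρ₁ ρ₂ c ε u v) :
    v =ᵐ[ρ₂] transform ρ₁ c ε u ∧ u =ᵐ[ρ₁] transformY ρ₂ c ε v := by
  have hc' : Measurable (Function.uncurry fun y x ↦ c x y) := hc.comp measurable_swap
  have hM' : ∀ y x, |c x y| ≤ M := fun y x ↦ hM x y
  have h₁ : Lexp ε ρ₁ 0 := lexp_of_abs_le (B := 0) ε measurable_const (by simp)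
  have h₂ : Lexp ε ρ₂ 0 := lexp_of_abs_le (B := 0) ε measurable_const (by simp)
  have hD₀ : Dext ρ₁ ρ₂ c ε 0 0 ≠ ⊥ := by
    rw [Dext_of_integrable ⟨integrable_zero _ _ _, integrable_zero _ _ _,
      integrable_exp_dual hε hc hM h₁ h₂⟩]
    exact EReal.coe_ne_bot _
  obtain ⟨hui, hvi, -⟩ := integrable_of_Dext_ne_bot (ne_bot_of_le_ne_bot hD₀ (hmax 0 0 h₁ h₂))
  refine ⟨ae_eq_transform_of_Dext_transform_le hε hc hM hu hui
    (hmax _ _ hu (lexp_transform hε hc hM hu)),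
    ae_eq_transform_of_Dext_transform_le hε hc' hM' hv hvi ?_⟩
  have := hmax _ _ (lexp_transform hε hc' hM' hv) hv
  rwa [← Dext_swap (c := c), ← Dext_swap (c := c)] at this

lemma integrable_of_ae_eq_transform [IsFiniteMeasure ρ₁] [IsFiniteMeasure ρ₂] (hε : 0 < ε)
    (hc : Measurable (Function.uncurry c)) (hM : ∀ x y, |c x y| ≤ M) (hu : Lexp ε ρ₁ u)
    (hv : Lexp ε ρ₂ v) (h : v =ᵐ[ρ₂] transform ρ₁ c ε u ∧ u =ᵐ[ρ₁] transformY ρ₂ c ε v) :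
    Integrable u ρ₁ ∧ Integrable v ρ₂ :=
  ⟨(integrable_transform (c := fun y x ↦ c x y) hε (hc.comp measurable_swap) (fun y x ↦ hM x y)
      hv).congr h.2.symm,
    (integrable_transform hε hc hM hu).congr h.1.symm⟩

end Sinkhorn

section EntropicPlan

variable {X Y : Type*} [MeasurableSpace X] [MeasurableSpace Y] {ρ₁ : Measure X}
  {ρ₂ : Measure Y} {c : X → Y → ℝ} {ε M : ℝ} {u : X → ℝ} {v : Y → ℝ}

variable (ρ₁ ρ₂ c ε) in
def gibbsKernel : Measure (X × Y) :=
  (ρ₁.prod ρ₂).withDensity fun p ↦ ENNReal.ofReal (exp (-c p.1 p.2 / ε))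

variable (ρ₁ ρ₂ c ε u v) in
def entropicPlan : Measure (X × Y) :=
  (ρ₁.prod ρ₂).withDensity fun p ↦ ENNReal.ofReal (exp ((u p.1 + v p.2 - c p.1 p.2) / ε))

lemma measurable_gibbsDensity (hc : Measurable (Function.uncurry c)) :
    Measurable fun p : X × Y ↦ ENNReal.ofReal (exp (-c p.1 p.2 / ε)) :=
  (hc.neg.div_const ε).exp.ennreal_ofReal

instance [SigmaFinite ρ₁] [SigmaFinite ρ₂] : SigmaFinite (gibbsKernel ρ₁ ρ₂ c ε) :=
  SigmaFinite.withDensity_ofReal _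

lemma entropicPlan_map_snd [SFinite ρ₁] [SFinite ρ₂] (hε : 0 < ε)
    (hc : Measurable (Function.uncurry c)) (hM : ∀ x y, |c x y| ≤ M) (hu : Lexp ε ρ₁ u)
    (hv : Measurable v) :
    (entropicPlan ρ₁ ρ₂ c ε u v).map Prod.snd
      = ρ₂.withDensity fun y ↦ ENNReal.ofReal (exp ((v y - transform ρ₁ c ε u y) / ε)) := by
  rw [entropicPlan, map_snd_prod_withDensity (measurable_exp_dual hc hu.1 hv).ennreal_ofReal]
  congr 1
  funext y
  rw [← ofReal_integral_eq_lintegral_ofReal (integrable_exp_dual_left hε hc hM hu v y)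
    (ae_of_all _ fun _ ↦ exp_nonneg _), integral_exp_dual_left hε hc hM hu v y]

lemma entropicPlan_map_fst [SFinite ρ₁] [SFinite ρ₂] (hε : 0 < ε)
    (hc : Measurable (Function.uncurry c)) (hM : ∀ x y, |c x y| ≤ M) (hu : Measurable u)
    (hv : Lexp ε ρ₂ v) :
    (entropicPlan ρ₁ ρ₂ c ε u v).map Prod.fst
      = ρ₁.withDensity fun x ↦ ENNReal.ofReal (exp ((u x - transformY ρ₂ c ε v x) / ε)) := by
  have hc' : Measurable (Function.uncurry fun y x ↦ c x y) := hc.comp measurable_swap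
  have hM' : ∀ y x, |c x y| ≤ M := fun y x ↦ hM x y
  rw [entropicPlan, map_fst_prod_withDensity (measurable_exp_dual hc hu hv.1).ennreal_ofReal]
  congr 1
  funext x
  simp_rw [add_comm (u x)]
  rw [← ofReal_integral_eq_lintegral_ofReal (integrable_exp_dual_left hε hc' hM' hv u x)
    (ae_of_all _ fun _ ↦ exp_nonneg _), integral_exp_dual_left hε hc' hM' hv u x]
  rfl

theorem coupling_entropicPlan_iff [IsProbabilityMeasure ρ₁] [IsProbabilityMeasure ρ₂]
    (hε : 0 < ε) (hc : Measurable (Function.uncurry c)) (hM : ∀ x y, |c x y| ≤ M)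
    (hu : Lexp ε ρ₁ u) (hv : Lexp ε ρ₂ v) :
    Coupling ρ₁ ρ₂ (entropicPlan ρ₁ ρ₂ c ε u v)
      ↔ v =ᵐ[ρ₂] transform ρ₁ c ε u ∧ u =ᵐ[ρ₁] transformY ρ₂ c ε v := by
  have hT : Measurable (transform ρ₁ c ε u) := measurable_transform hc hu.1
  have hT' : Measurable (transformY ρ₂ c ε v) :=
    measurable_transform (c := fun y x ↦ c x y) (hc.comp measurable_swap) hv.1
  rw [coupling_iff, entropicPlan_map_fst hε hc hM hu.1 hv, entropicPlan_map_snd hε hc hM hu hv.1,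
    withDensity_ofReal_exp_eq_self_iff (f := fun x ↦ (u x - transformY ρ₂ c ε v x) / ε)
      ((hu.1.sub hT').div_const ε).aemeasurable,
    withDensity_ofReal_exp_eq_self_iff (f := fun y ↦ (v y - transform ρ₁ c ε u y) / ε)
      ((hv.1.sub hT).div_const ε).aemeasurable,
    sub_div_ae_eq_zero_iff hε.ne', sub_div_ae_eq_zero_iff hε.ne', and_comm]

lemma integrable_exp_gibbsKernel (hc : Measurable (Function.uncurry c))
    (hexp : Integrable (fun p : X × Y ↦ exp ((u p.1 + v p.2 - c p.1 p.2) / ε)) (ρ₁.prod ρ₂)) :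
    Integrable (fun p : X × Y ↦ exp ((u p.1 + v p.2) / ε)) (gibbsKernel ρ₁ ρ₂ c ε) := by
  rw [gibbsKernel, integrable_withDensity_iff_integrable_smul' (measurable_gibbsDensity hc)
    (ae_of_all _ fun _ ↦ ENNReal.ofReal_lt_top)]
  refine hexp.congr (ae_of_all _ fun p ↦ ?_)
  simp only [ENNReal.toReal_ofReal (exp_nonneg _), smul_eq_mul, ← exp_add]
  ring_nf

lemma integral_exp_gibbsKernel (hc : Measurable (Function.uncurry c)) :
    ∫ p, exp ((u p.1 + v p.2) / ε) ∂(gibbsKernel ρ₁ ρ₂ c ε)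
      = ∫ p, exp ((u p.1 + v p.2 - c p.1 p.2) / ε) ∂(ρ₁.prod ρ₂) := by
  rw [gibbsKernel, integral_withDensity_eq_integral_toReal_smul (measurable_gibbsDensity hc)
    (ae_of_all _ fun _ ↦ ENNReal.ofReal_lt_top)]
  congr 1
  funext p
  simp only [ENNReal.toReal_ofReal (exp_nonneg _), smul_eq_mul, ← exp_add]
  ring_nf

lemma entropicPlan_eq_withDensity (hc : Measurable (Function.uncurry c))
    (hu : AEMeasurable u ρ₁) (hv : AEMeasurable v ρ₂) :
    entropicPlan ρ₁ ρ₂ c ε u v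
      = (gibbsKernel ρ₁ ρ₂ c ε).withDensity fun p ↦ ENNReal.ofReal (exp ((u p.1 + v p.2) / ε)) := by
  have hψ : AEMeasurable (fun p : X × Y ↦ ENNReal.ofReal (exp ((u p.1 + v p.2) / ε)))
      (ρ₁.prod ρ₂) := ((hu.comp_fst.add hv.comp_snd).div_const ε).exp.ennreal_ofReal
  rw [entropicPlan, gibbsKernel, ← withDensity_mul₀ (measurable_gibbsDensity hc).aemeasurable hψ]
  congr 1
  funext p
  rw [Pi.mul_apply, ← ENNReal.ofReal_mul (exp_nonneg _), ← exp_add]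
  ring_nf

end EntropicPlan

lemma KL_of_ac_of_integrable {Z : Type*} [MeasurableSpace Z] {μ ν : Measure Z}
    (h : μ ≪ ν ∧ Integrable (llr μ ν) μ) : KL μ ν = ∫ z, llr μ ν z ∂μ :=
  if_pos h

lemma KL_eq_top_of_not {Z : Type*} [MeasurableSpace Z] {μ ν : Measure Z}
    (h : ¬ (μ ≪ ν ∧ Integrable (llr μ ν) μ)) : KL μ ν = ⊤ :=
  if_neg h

section Duality

variable {X Y : Type*} [MeasurableSpace X] [MeasurableSpace Y] {ρ₁ : Measure X}
  {ρ₂ : Measure Y} {c : X → Y → ℝ} {ε : ℝ} {u : X → ℝ} {v : Y → ℝ} {γ : Measure (X × Y)}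

theorem Dext_add_le_mul_KL [SigmaFinite ρ₁] [SigmaFinite ρ₂] (hε : 0 < ε)
    (hc : Measurable (Function.uncurry c)) (hγ : Coupling ρ₁ ρ₂ γ) :
    Dext ρ₁ ρ₂ c ε u v + ε ≤ ε * KL γ (gibbsKernel ρ₁ ρ₂ c ε) := by
  have := hγ.1
  by_cases hD : Dext ρ₁ ρ₂ c ε u v = ⊥
  · simp [hD]
  obtain ⟨hui, hvi, hexp⟩ := integrable_of_Dext_ne_bot hD
  by_cases hKL : γ ≪ gibbsKernel ρ₁ ρ₂ c ε ∧ Integrable (llr γ (gibbsKernel ρ₁ ρ₂ c ε)) γ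
  · rw [KL_of_ac_of_integrable hKL, Dext_of_integrable ⟨hui, hvi, hexp⟩, ← EReal.coe_add,
      ← EReal.coe_mul, EReal.coe_le_coe_iff]
    have h := integral_add_one_sub_integral_exp_le_integral_llr hKL.1
      ((hγ.integrable_fst_add_snd hui hvi).div_const ε) (integrable_exp_gibbsKernel hc hexp) hKL.2
    rw [integral_div, hγ.integral_fst_add_snd hui hvi, integral_exp_gibbsKernel hc] at h
    calc _ = ε * ((∫ x, u x ∂ρ₁ + ∫ y, v y ∂ρ₂) / ε + 1
          - ∫ p, exp ((u p.1 + v p.2 - c p.1 p.2) / ε) ∂(ρ₁.prod ρ₂)) := by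
          field_simp
          ring
      _ ≤ _ := mul_le_mul_of_nonneg_left h hε.le
  · rw [KL_eq_top_of_not hKL, EReal.coe_mul_top_of_pos hε]
    exact le_top

theorem eq_entropicPlan_of_mul_KL_eq [SigmaFinite ρ₁] [SigmaFinite ρ₂] (hε : 0 < ε)
    (hc : Measurable (Function.uncurry c)) (hγ : Coupling ρ₁ ρ₂ γ)
    (h : ε * KL γ (gibbsKernel ρ₁ ρ₂ c ε) = Dext ρ₁ ρ₂ c ε u v + ε) :
    γ = entropicPlan ρ₁ ρ₂ c ε u v := by
  have := hγ.1
  -- `ε * KL γ K` is real or `⊤`, never `⊥`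
  have hD : Dext ρ₁ ρ₂ c ε u v ≠ ⊥ := by
    rintro hD
    by_cases hKL : γ ≪ gibbsKernel ρ₁ ρ₂ c ε ∧ Integrable (llr γ (gibbsKernel ρ₁ ρ₂ c ε)) γ
    · simp [hD, KL_of_ac_of_integrable hKL, ← EReal.coe_mul] at h
    · simp [hD, KL_eq_top_of_not hKL, EReal.coe_mul_top_of_pos hε] at h
  obtain ⟨hui, hvi, hexp⟩ := integrable_of_Dext_ne_bot hD
  rw [Dext_of_integrable ⟨hui, hvi, hexp⟩, ← EReal.coe_add] at h
  by_cases hKL : γ ≪ gibbsKernel ρ₁ ρ₂ c ε ∧ Integrable (llr γ (gibbsKernel ρ₁ ρ₂ c ε)) γ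
  · rw [KL_of_ac_of_integrable hKL, ← EReal.coe_mul, EReal.coe_eq_coe_iff] at h
    rw [entropicPlan_eq_withDensity hc hui.aemeasurable hvi.aemeasurable]
    refine eq_withDensity_exp_of_integral_llr_eq hKL.1
      ((hγ.integrable_fst_add_snd hui hvi).div_const ε) (integrable_exp_gibbsKernel hc hexp)
      hKL.2 ?_
    rw [integral_div, hγ.integral_fst_add_snd hui hvi, integral_exp_gibbsKernel hc]
    field_simp
    linarith
  · rw [KL_eq_top_of_not hKL, EReal.coe_mul_top_of_pos hε] at h
    exact absurd h.symm (EReal.coe_ne_top _)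

theorem mul_KL_entropicPlan [SigmaFinite ρ₁] [SigmaFinite ρ₂] (hε : 0 < ε)
    (hc : Measurable (Function.uncurry c)) (hui : Integrable u ρ₁) (hvi : Integrable v ρ₂)
    (hexp : Integrable (fun p : X × Y ↦ exp ((u p.1 + v p.2 - c p.1 p.2) / ε)) (ρ₁.prod ρ₂))
    (hγ : Coupling ρ₁ ρ₂ (entropicPlan ρ₁ ρ₂ c ε u v)) :
    ε * KL (entropicPlan ρ₁ ρ₂ c ε u v) (gibbsKernel ρ₁ ρ₂ c ε) = Dext ρ₁ ρ₂ c ε u v + ε := by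
  have hmass : ∫ p, exp ((u p.1 + v p.2 - c p.1 p.2) / ε) ∂(ρ₁.prod ρ₂) = 1 := by
    have h := hγ.1.measure_univ
    rwa [entropicPlan, withDensity_apply _ .univ, Measure.restrict_univ,
      ← ofReal_integral_eq_lintegral_ofReal hexp (ae_of_all _ fun _ ↦ exp_nonneg _),
      ENNReal.ofReal_eq_one] at h
  have hplan := entropicPlan_eq_withDensity (ε := ε) hc hui.aemeasurable hvi.aemeasurable
  have hac : entropicPlan ρ₁ ρ₂ c ε u v ≪ gibbsKernel ρ₁ ρ₂ c ε := by
    rw [hplan]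
    exact withDensity_absolutelyContinuous _ _
  have hllr : llr (entropicPlan ρ₁ ρ₂ c ε u v) (gibbsKernel ρ₁ ρ₂ c ε)
      =ᵐ[entropicPlan ρ₁ ρ₂ c ε u v] fun p ↦ (u p.1 + v p.2) / ε := by
    have hψ : AEMeasurable (fun p : X × Y ↦ ENNReal.ofReal (exp ((u p.1 + v p.2) / ε)))
        (ρ₁.prod ρ₂) :=
      ((hui.aemeasurable.comp_fst.add hvi.aemeasurable.comp_snd).div_const ε).exp.ennreal_ofReal
    have hrn := Measure.rnDeriv_withDensity₀ (gibbsKernel ρ₁ ρ₂ c ε)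
      (hψ.mono_ac (withDensity_absolutelyContinuous _ _))
    rw [← hplan] at hrn
    filter_upwards [hac.ae_le hrn] with p hp
    rw [llr, hp, ENNReal.toReal_ofReal (exp_nonneg _), log_exp]
  have hψi := (hγ.integrable_fst_add_snd hui hvi).div_const ε
  rw [KL_of_ac_of_integrable ⟨hac, hψi.congr hllr.symm⟩,
    integral_congr_ae hllr, integral_div, hγ.integral_fst_add_snd hui hvi,
    Dext_of_integrable ⟨hui, hvi, hexp⟩, hmass, ← EReal.coe_mul, ← EReal.coe_add]
  congr 1
  field_simp
  ring

end Duality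

theorem equivalence_and_complementarity_general
    {X Y : Type*}
    [MeasurableSpace X]
    [MeasurableSpace Y]
    (ρ₁ : Measure X) [IsProbabilityMeasure ρ₁]
    (ρ₂ : Measure Y) [IsProbabilityMeasure ρ₂]
    (ε : ℝ) (hε : 0 < ε)
    (c : X → Y → ℝ) (hc : Measurable (Function.uncurry c))
    (M : ℝ) (hM : ∀ x y, |c x y| ≤ M)
    (u v : _) (hu : Lexp ε ρ₁ u) (hv : Lexp ε ρ₂ v) :
    -- the Gibbs kernel
    let K : Measure (X × Y) := (ρ₁.prod ρ₂).withDensity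
      (fun p => ENNReal.ofReal (Real.exp (-c p.1 p.2 / ε)))
    -- the candidate optimal plan
    let γstar : Measure (X × Y) := (ρ₁.prod ρ₂).withDensity
      (fun p => ENNReal.ofReal (Real.exp ((u p.1 + v p.2 - c p.1 p.2) / ε)))
    -- the entropic optimal transport value
    let OTval : EReal :=
      ⨅ γ : {γ : Measure (X × Y) // Coupling ρ₁ ρ₂ γ}, (ε : EReal) * KL γ.1 K
    -- (1) maximizers
    let P1 : Prop := ∀ (u' : X → ℝ) (v' : Y → ℝ), Lexp ε ρ₁ u' → Lexp ε ρ₂ v' →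
      Dext ρ₁ ρ₂ c ε u' v' ≤ Dext ρ₁ ρ₂ c ε u v
    -- (2) maximality condition
    let P2 : Prop := v =ᵐ[ρ₂] transform ρ₁ c ε u ∧ u =ᵐ[ρ₁] transformY ρ₂ c ε v
    -- (3) Schrödinger system
    let P3 : Prop := Coupling ρ₁ ρ₂ γstar
    -- (4) duality attainment
    let P4 : Prop := OTval = Dext ρ₁ ρ₂ c ε u v + (ε : EReal)
    ((P1 ↔ P2) ∧ (P2 ↔ P3) ∧ (P3 ↔ P4)) ∧
    (P1 → ∀ γ : Measure (X × Y), Coupling ρ₁ ρ₂ γ →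
      ((ε : EReal) * KL γstar K ≤ (ε : EReal) * KL γ K ∧
       ((ε : EReal) * KL γ K = (ε : EReal) * KL γstar K → γ = γstar))) := by
  intro K γstar OTval P1 P2 P3 P4
  have weak : ∀ (u' : X → ℝ) (v' : Y → ℝ), Dext ρ₁ ρ₂ c ε u' v' + ε ≤ OTval := fun _ _ ↦
    le_iInf fun γ ↦ Dext_add_le_mul_KL hε hc γ.2
  have h12 : P1 → P2 := ae_eq_transform_of_forall_Dext_le hε hc hM hu hv
  have h23 : P2 ↔ P3 := (coupling_entropicPlan_iff hε hc hM hu hv).symm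
  have hKL : P3 → ε * KL γstar K = Dext ρ₁ ρ₂ c ε u v + ε := fun h3 ↦
    have hint := integrable_of_ae_eq_transform hε hc hM hu hv (h23.2 h3)
    mul_KL_entropicPlan hε hc hint.1 hint.2 (integrable_exp_dual hε hc hM hu hv) h3
  have h34 : P3 → P4 := fun h3 ↦ le_antisymm (iInf_le_of_le ⟨γstar, h3⟩ (hKL h3).le) (weak u v)
  have h41 : P4 → P1 := fun h4 u' v' _ _ ↦
    (EReal.addLECancellable_coe ε).add_le_add_iff_right.1 (h4 ▸ weak u' v')
  refine ⟨⟨⟨h12, fun h2 ↦ h41 (h34 (h23.1 h2))⟩, h23, h34, fun h4 ↦ h23.1 (h12 (h41 h4))⟩,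
    fun h1 γ hγ ↦ ?_⟩
  rw [hKL (h23.1 (h12 h1))]
  exact ⟨Dext_add_le_mul_KL hε hc hγ, eq_entropicPlan_of_mul_KL_eq hε hc hγ⟩

theorem equivalence_and_complementarity
    {X Y : Type*}
    [MeasurableSpace X] [TopologicalSpace X] [PolishSpace X] [BorelSpace X]
    [MeasurableSpace Y] [TopologicalSpace Y] [PolishSpace Y] [BorelSpace Y]
    (ρ₁ : Measure X) [IsProbabilityMeasure ρ₁]
    (ρ₂ : Measure Y) [IsProbabilityMeasure ρ₂]
    (ε : ℝ) (hε : 0 < ε)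
    (c : X → Y → ℝ) (hc : Measurable (Function.uncurry c))
    (M : ℝ) (hM : ∀ x y, |c x y| ≤ M)
    (u v : _) (hu : Lexp ε ρ₁ u) (hv : Lexp ε ρ₂ v) :
    -- the Gibbs kernel
    let K : Measure (X × Y) := (ρ₁.prod ρ₂).withDensity
      (fun p => ENNReal.ofReal (Real.exp (-c p.1 p.2 / ε)))
    -- the candidate optimal plan
    let γstar : Measure (X × Y) := (ρ₁.prod ρ₂).withDensity
      (fun p => ENNReal.ofReal (Real.exp ((u p.1 + v p.2 - c p.1 p.2) / ε)))
    -- the entropic optimal transport value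
    let OTval : EReal :=
      ⨅ γ : {γ : Measure (X × Y) // Coupling ρ₁ ρ₂ γ}, (ε : EReal) * KL γ.1 K
    -- (1) maximizers
    let P1 : Prop := ∀ (u' : X → ℝ) (v' : Y → ℝ), Lexp ε ρ₁ u' → Lexp ε ρ₂ v' →
      Dext ρ₁ ρ₂ c ε u' v' ≤ Dext ρ₁ ρ₂ c ε u v
    -- (2) maximality condition
    let P2 : Prop := v =ᵐ[ρ₂] transform ρ₁ c ε u ∧ u =ᵐ[ρ₁] transformY ρ₂ c ε v
    -- (3) Schrödinger system
    let P3 : Prop := Coupling ρ₁ ρ₂ γstar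
    -- (4) duality attainment
    let P4 : Prop := OTval = Dext ρ₁ ρ₂ c ε u v + (ε : EReal)
    ((P1 ↔ P2) ∧ (P2 ↔ P3) ∧ (P3 ↔ P4)) ∧
    (P1 → ∀ γ : Measure (X × Y), Coupling ρ₁ ρ₂ γ →
      ((ε : EReal) * KL γstar K ≤ (ε : EReal) * KL γ K ∧
       ((ε : EReal) * KL γ K = (ε : EReal) * KL γstar K → γ = γstar))) :=
  equivalence_and_complementarity_general ρ₁ ρ₂ ε hε c hc M hM u v hu hv

end
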